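/- If G is a graph of order n with δ_h ≥ 1 and n < δ_h²/(ln δ_h + 1), then γ_{2sr}(G) ≤ ((ln(δ_h + 1) + 1)/(δ_h + 1)) · n and γ_{t2sr}(G) ≤ ((ln δ_h + 1)/δ_h) · n. -/

import Mathlib

open Finset

noncomputable section
open scoped Classical

variable {n : ℕ}

/-- The set of vertices at distance exactly 2 from `i`. -/
def N2 (G : SimpleGraph (Fin n)) (i : Fin n) : Finset (Fin n) :=
  Finset.univ.filter (fun j => G.dist i j = 2)

/-- The neighborhood of `i`. -/
def Nbr (G : SimpleGraph (Fin n)) (i : Fin n) : Finset (Fin n) :=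
  Finset.univ.filter (fun j => G.Adj i j)

/-- Hop degree of a vertex. -/
def hopDeg (G : SimpleGraph (Fin n)) (i : Fin n) : ℕ := (N2 G i).card

/-- Minimum hop degree. -/
def minHopDeg (G : SimpleGraph (Fin n)) : ℕ := ⨅ i, hopDeg G i

/-- Minimum degree. -/
def minDeg (G : SimpleGraph (Fin n)) : ℕ := ⨅ i, (Nbr G i).card

def IsHopDomSet (G : SimpleGraph (Fin n)) (S : Finset (Fin n)) : Prop :=
  ∀ u, u ∉ S → ∃ v ∈ S, G.dist u v = 2

def IsTwoStepDomSet (G : SimpleGraph (Fin n)) (S : Finset (Fin n)) : Prop :=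
  ∀ u : Fin n, ∃ v ∈ S, G.dist u v = 2

def IsRestrainedHopDomSet (G : SimpleGraph (Fin n)) (S : Finset (Fin n)) : Prop :=
  IsHopDomSet G S ∧ ∀ u, u ∉ S → ∃ v, v ∉ S ∧ G.Adj u v

def IsTotalRestrainedHopDomSet (G : SimpleGraph (Fin n)) (S : Finset (Fin n)) : Prop :=
  IsTwoStepDomSet G S ∧ ∀ u, u ∉ S → ∃ v, v ∉ S ∧ G.Adj u v

def IsTwoStepRestrainedDomSet (G : SimpleGraph (Fin n)) (S : Finset (Fin n)) : Prop :=
  IsHopDomSet G S ∧ ∀ u, u ∉ S → ∃ v, v ∉ S ∧ G.dist u v = 2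

def IsTotalTwoStepRestrainedDomSet (G : SimpleGraph (Fin n)) (S : Finset (Fin n)) : Prop :=
  IsTwoStepDomSet G S ∧ ∀ u, u ∉ S → ∃ v, v ∉ S ∧ G.dist u v = 2

def hopDomNum (G : SimpleGraph (Fin n)) : ℕ :=
  sInf {k | ∃ S : Finset (Fin n), IsHopDomSet G S ∧ S.card = k}

def twoStepDomNum (G : SimpleGraph (Fin n)) : ℕ :=
  sInf {k | ∃ S : Finset (Fin n), IsTwoStepDomSet G S ∧ S.card = k}

def rhDomNum (G : SimpleGraph (Fin n)) : ℕ :=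
  sInf {k | ∃ S : Finset (Fin n), IsRestrainedHopDomSet G S ∧ S.card = k}

def trhDomNum (G : SimpleGraph (Fin n)) : ℕ :=
  sInf {k | ∃ S : Finset (Fin n), IsTotalRestrainedHopDomSet G S ∧ S.card = k}

def tsrDomNum (G : SimpleGraph (Fin n)) : ℕ :=
  sInf {k | ∃ S : Finset (Fin n), IsTwoStepRestrainedDomSet G S ∧ S.card = k}

def ttsrDomNum (G : SimpleGraph (Fin n)) : ℕ :=
  sInf {k | ∃ S : Finset (Fin n), IsTotalTwoStepRestrainedDomSet G S ∧ S.card = k}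

/-- The graph `Dist(G;2)` joining vertices at distance exactly 2 in `G`. -/
def dist2Graph (G : SimpleGraph (Fin n)) : SimpleGraph (Fin n) where
  Adj u v := u ≠ v ∧ G.dist u v = 2
  symm := by
    constructor
    intro u v h
    exact ⟨h.1.symm, by rw [SimpleGraph.dist_comm]; exact h.2⟩
  loopless := ⟨fun v h => h.1 rfl⟩

def domNum (H : SimpleGraph (Fin n)) : ℕ :=
  sInf {k | ∃ S : Finset (Fin n), (∀ u, u ∉ S → ∃ v ∈ S, H.Adj u v) ∧ S.card = k}

def totalDomNum (H : SimpleGraph (Fin n)) : ℕ :=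
  sInf {k | ∃ S : Finset (Fin n), (∀ u : Fin n, ∃ v ∈ S, H.Adj u v) ∧ S.card = k}

/-- Matching number: maximum number of edges in a matching. -/
def matchingNum (G : SimpleGraph (Fin n)) : ℕ :=
  sSup {k | ∃ M : SimpleGraph.Subgraph G, M.IsMatching ∧ M.edgeSet.ncard = k}

/-- A hop matching: a set of paths of length two, no two of which share an end vertex. -/
def IsHopMatching (G : SimpleGraph (Fin n)) (H : Finset (Fin n × Fin n × Fin n)) : Prop :=
  (∀ t ∈ H, G.Adj t.1 t.2.1 ∧ G.Adj t.2.1 t.2.2 ∧ t.1 ≠ t.2.2) ∧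
  ∀ t ∈ H, ∀ t' ∈ H, t ≠ t' →
    t.1 ≠ t'.1 ∧ t.1 ≠ t'.2.2 ∧ t.2.2 ≠ t'.1 ∧ t.2.2 ≠ t'.2.2

/-- Hop matching number. -/
def hopMatchingNum (G : SimpleGraph (Fin n)) : ℕ :=
  sSup {k | ∃ H : Finset (Fin n × Fin n × Fin n), IsHopMatching G H ∧ H.card = k}

def frh (G : SimpleGraph (Fin n)) (p : Fin n → ℝ) : ℝ :=
  (∑ i, p i) + (∑ i, (1 - p i) * ∏ j ∈ N2 G i, (1 - p j)) +
  ∑ i, (1 - p i) * (1 - (1 - p i) * ∏ j ∈ N2 G i, (1 - p j)) *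
    ∏ j ∈ Nbr G i, (p j + (1 - p j) * ∏ k ∈ N2 G j, (1 - p k))

def f2sr (G : SimpleGraph (Fin n)) (p : Fin n → ℝ) : ℝ :=
  (∑ i, p i) + (∑ i, (1 - p i) * ∏ j ∈ N2 G i, (1 - p j)) +
  ∑ i, (1 - p i) * (1 - (1 - p i) * ∏ j ∈ N2 G i, (1 - p j)) *
    ∏ j ∈ N2 G i, (p j + (1 - p j) * ∏ k ∈ N2 G j, (1 - p k))

def ZSet (G : SimpleGraph (Fin n)) (X : Finset (Fin n)) : Finset (Fin n) :=
  Finset.univ.filter (fun i => i ∉ X ∧ N2 G i ∩ X = ∅)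

def YSet (G : SimpleGraph (Fin n)) (X : Finset (Fin n)) : Finset (Fin n) :=
  Finset.univ.filter (fun i => i ∉ X ∪ ZSet G X ∧ Nbr G i ⊆ X ∪ ZSet G X)

def DSet (G : SimpleGraph (Fin n)) (X : Finset (Fin n)) : Finset (Fin n) :=
  X ∪ ZSet G X ∪ YSet G X


/-!
Choose a random set `S`, putting each vertex in it independently with probability `p`, and add
every vertex `v` whose closed hop neighbourhood (for the 2-step version: whose hop neighbourhood)
misses `S`. The result is a hop (2-step) dominating set of expected size at most
`n p + n (1 - p) ^ m`, where `m = δ_h + 1` (resp. `m = δ_h`); for `p = ln m / m` this is at most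
`(ln m + 1) / m · n`. The assumption on `n` makes this smaller than `δ_h`, and a set with fewer
than `δ_h` vertices cannot contain all the vertices at distance 2 from any vertex, so the
restraint condition holds automatically.
-/

section RandomSubset

variable {α : Type*} [Fintype α]

lemma exists_le_sum_mul_of_sum_eq_one {ι : Type*} [Fintype ι] (w f : ι → ℝ) (hw : ∀ i, 0 ≤ w i)
    (hw1 : ∑ i, w i = 1) : ∃ i, f i ≤ ∑ j, w j * f j := by
  by_contra! h
  obtain ⟨i, -, hi⟩ := exists_ne_zero_of_sum_ne_zero (hw1.symm ▸ one_ne_zero : ∑ i, w i ≠ 0)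
  have hlt : ∑ j, w j * ∑ k, w k * f k < ∑ j, w j * f j :=
    sum_lt_sum (fun j _ => mul_le_mul_of_nonneg_left (h j).le (hw j))
      ⟨i, mem_univ i, mul_lt_mul_of_pos_left (h i) ((hw i).lt_of_ne' hi)⟩
  rw [← sum_mul, hw1, one_mul] at hlt
  exact hlt.false

lemma sum_mul_card_filter {β : Type*} [Fintype β] (f : Finset α → ℝ) (P : β → Finset α → Prop)
    [∀ x S, Decidable (P x S)] :
    ∑ S, f S * #{x | P x S} = ∑ x, ∑ S with P x S, f S := by
  simp only [card_filter, Nat.cast_sum, Nat.cast_ite, Nat.cast_one, Nat.cast_zero, mul_sum,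
    mul_ite, mul_one, mul_zero, sum_filter]
  exact sum_comm

variable [DecidableEq α]

/-- The probability that a random subset, containing each element independently with
probability `p`, equals `S`. -/
def bernoulliWeight (p : ℝ) (S : Finset α) : ℝ := p ^ #S * (1 - p) ^ #Sᶜ

lemma bernoulliWeight_nonneg {p : ℝ} (hp0 : 0 ≤ p) (hp1 : p ≤ 1) (S : Finset α) :
    0 ≤ bernoulliWeight p S := by
  unfold bernoulliWeight
  have : 0 ≤ 1 - p := by linarith
  positivity

lemma sum_bernoulliWeight_filter_disjoint (p : ℝ) (T : Finset α) :
    ∑ S with Disjoint S T, bernoulliWeight p S = (1 - p) ^ #T := by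
  have hprod : ∀ S : Finset α, ∏ i ∈ S, (if i ∈ T then 0 else p) =
      if Disjoint S T then p ^ #S else 0 := by
    intro S
    split_ifs with h
    · rw [prod_congr rfl fun i hi => if_neg (disjoint_left.mp h hi), prod_const]
    · obtain ⟨i, hiS, hiT⟩ := not_disjoint_iff.mp h
      exact prod_eq_zero hiS (if_pos hiT)
  calc ∑ S with Disjoint S T, bernoulliWeight p S
      = ∑ S ∈ univ.powerset, (∏ i ∈ S, (if i ∈ T then 0 else p)) * ∏ i ∈ univ \ S, (1 - p) := by
        rw [sum_filter, powerset_univ]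
        refine sum_congr rfl fun S _ => ?_
        rw [hprod, prod_const, ← compl_eq_univ_sdiff, bernoulliWeight, ite_mul, zero_mul]
    _ = ∏ i, ((if i ∈ T then 0 else p) + (1 - p)) := (prod_add _ _ _).symm
    _ = (1 - p) ^ #T := by
        rw [← prod_const, ← prod_subset (subset_univ T)]
        · exact prod_congr rfl fun i hi => by simp [hi]
        · intro i _ hi; simp [hi]

lemma sum_bernoulliWeight (p : ℝ) : ∑ S : Finset α, bernoulliWeight p S = 1 := by
  simpa using sum_bernoulliWeight_filter_disjoint (α := α) p ∅

lemma sum_bernoulliWeight_filter_mem (p : ℝ) (i : α) :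
    ∑ S with i ∈ S, bernoulliWeight p S = p := by
  have h := sum_filter_add_sum_filter_not univ (fun S => i ∈ S) (bernoulliWeight p)
  simp only [← disjoint_singleton_right] at h
  rw [sum_bernoulliWeight, sum_bernoulliWeight_filter_disjoint, card_singleton, pow_one] at h
  linarith

lemma sum_bernoulliWeight_mul_card (p : ℝ) :
    ∑ S : Finset α, bernoulliWeight p S * #S = Fintype.card α * p := by
  have h := sum_mul_card_filter (bernoulliWeight p) (fun (i : α) S => i ∈ S)
  simp only [filter_mem_eq_inter, univ_inter, sum_bernoulliWeight_filter_mem, sum_const,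
    card_univ, nsmul_eq_mul] at h
  exact h

lemma sum_bernoulliWeight_mul_card_disjoint (p : ℝ) (T : α → Finset α) :
    ∑ S, bernoulliWeight p S * #{v | Disjoint S (T v)} = ∑ v, (1 - p) ^ #(T v) := by
  rw [sum_mul_card_filter]
  exact sum_congr rfl fun v _ => sum_bernoulliWeight_filter_disjoint p (T v)

lemma exists_card_add_card_disjoint_le {p : ℝ} (hp0 : 0 ≤ p) (hp1 : p ≤ 1) (T : α → Finset α) :
    ∃ S : Finset α, (#S + #{v | Disjoint S (T v)} : ℝ) ≤
      Fintype.card α * p + ∑ v, (1 - p) ^ #(T v) := by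
  obtain ⟨S, hS⟩ := exists_le_sum_mul_of_sum_eq_one (bernoulliWeight p)
    (fun S => (#S + #{v | Disjoint S (T v)} : ℝ)) (bernoulliWeight_nonneg hp0 hp1)
    (sum_bernoulliWeight p)
  refine ⟨S, hS.trans_eq ?_⟩
  simp only [mul_add, sum_add_distrib, sum_bernoulliWeight_mul_card,
    sum_bernoulliWeight_mul_card_disjoint]

lemma exists_card_add_card_disjoint_le_log {m : ℕ} (hm : 0 < m) (T : α → Finset α)
    (hT : ∀ v, m ≤ #(T v)) :
    ∃ S : Finset α, (#S + #{v | Disjoint S (T v)} : ℝ) ≤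
      (Real.log m + 1) / m * Fintype.card α := by
  have hm' : (0 : ℝ) < m := by exact_mod_cast hm
  have hlog : Real.log m ≤ m := (Real.log_le_sub_one_of_pos hm').trans (by linarith)
  set p := Real.log m / m with hp
  have hp0 : 0 ≤ p := div_nonneg (Real.log_natCast_nonneg m) hm'.le
  have hp1 : p ≤ 1 := div_le_one_of_le₀ hlog hm'.le
  have hpow : (1 - p) ^ m ≤ 1 / m := by
    calc (1 - p) ^ m ≤ Real.exp (-Real.log m) := Real.one_sub_div_pow_le_exp_neg hlog
      _ = 1 / m := by rw [Real.exp_neg, Real.exp_log hm', one_div]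
  obtain ⟨S, hS⟩ := exists_card_add_card_disjoint_le hp0 hp1 T
  refine ⟨S, hS.trans ?_⟩
  calc Fintype.card α * p + ∑ v, (1 - p) ^ #(T v)
      ≤ Fintype.card α * p + ∑ _v : α, 1 / (m : ℝ) := by
        gcongr with v
        exact (pow_le_pow_of_le_one (by linarith) (by linarith) (hT v)).trans hpow
    _ = (Real.log m + 1) / m * Fintype.card α := by
        rw [sum_const, card_univ, nsmul_eq_mul, hp]
        field_simp

end RandomSubset

section HopDomination

variable (G : SimpleGraph (Fin n))

lemma mem_N2 {i j : Fin n} : j ∈ N2 G i ↔ G.dist i j = 2 := by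
  simp [N2]

lemma self_notMem_N2 (i : Fin n) : i ∉ N2 G i := by
  simp [N2]

lemma minHopDeg_le_card_N2 (i : Fin n) : minHopDeg G ≤ #(N2 G i) :=
  ciInf_le (OrderBot.bddBelow _) i

theorem exists_isHopDomSet_card_le :
    ∃ S, IsHopDomSet G S ∧
      (#S : ℝ) ≤ (Real.log (minHopDeg G + 1) + 1) / (minHopDeg G + 1) * n := by
  have hT : ∀ v, minHopDeg G + 1 ≤ #(insert v (N2 G v)) := fun v => by
    rw [card_insert_of_notMem (self_notMem_N2 G v)]
    exact Nat.succ_le_succ (minHopDeg_le_card_N2 G v)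
  obtain ⟨S, hS⟩ := exists_card_add_card_disjoint_le_log (Nat.succ_pos _) _ hT
  set B : Finset (Fin n) := {v | Disjoint S (insert v (N2 G v))}
  refine ⟨S ∪ B, fun u hu => ?_, ?_⟩
  · simp only [B, mem_union, mem_filter_univ, not_or, disjoint_insert_right] at hu
    obtain ⟨v, hvS, hvu⟩ := not_disjoint_iff.mp fun h => hu.2 ⟨hu.1, h⟩
    exact ⟨v, mem_union_left _ hvS, (mem_N2 G).mp hvu⟩
  · have hcard := card_union_le S B
    push_cast [Fintype.card_fin] at hS
    exact (Nat.cast_le.mpr hcard).trans (by push_cast; exact hS)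

theorem exists_isTwoStepDomSet_card_le (hδ : 0 < minHopDeg G) :
    ∃ S, IsTwoStepDomSet G S ∧
      (#S : ℝ) ≤ (Real.log (minHopDeg G) + 1) / (minHopDeg G) * n := by
  have hT := minHopDeg_le_card_N2 G
  choose f hf using fun v => card_pos.mp (hδ.trans_le (hT v))
  obtain ⟨S, hS⟩ := exists_card_add_card_disjoint_le_log hδ _ hT
  refine ⟨S ∪ image f {v | Disjoint S (N2 G v)}, fun u => ?_, ?_⟩
  · by_cases hu : Disjoint S (N2 G u)
    · exact ⟨f u, mem_union_right _ (mem_image_of_mem f (by simpa using hu)),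
        (mem_N2 G).mp (hf u)⟩
    · obtain ⟨v, hvS, hvu⟩ := not_disjoint_iff.mp hu
      exact ⟨v, mem_union_left _ hvS, (mem_N2 G).mp hvu⟩
  · have hcard := (card_union_le S _).trans (Nat.add_le_add_left
      (card_image_le (s := {v | Disjoint S (N2 G v)}) (f := f)) #S)
    rw [Fintype.card_fin] at hS
    exact (Nat.cast_le.mpr hcard).trans (by push_cast; exact hS)

lemma exists_notMem_dist_eq_two_of_card_lt {S : Finset (Fin n)} (hS : #S < minHopDeg G)
    (u : Fin n) : ∃ v, v ∉ S ∧ G.dist u v = 2 := by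
  obtain ⟨v, hvu, hvS⟩ := not_subset.mp fun h : N2 G u ⊆ S =>
    (hS.trans_le (minHopDeg_le_card_N2 G u)).not_ge (card_le_card h)
  exact ⟨v, hvS, (mem_N2 G).mp hvu⟩

lemma tsrDomNum_le_card {S : Finset (Fin n)} (hS : IsHopDomSet G S) (hcard : #S < minHopDeg G) :
    tsrDomNum G ≤ #S :=
  Nat.sInf_le ⟨S, ⟨hS, fun u _ => exists_notMem_dist_eq_two_of_card_lt G hcard u⟩, rfl⟩

lemma ttsrDomNum_le_card {S : Finset (Fin n)} (hS : IsTwoStepDomSet G S)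
    (hcard : #S < minHopDeg G) : ttsrDomNum G ≤ #S :=
  Nat.sInf_le ⟨S, ⟨hS, fun u _ => exists_notMem_dist_eq_two_of_card_lt G hcard u⟩, rfl⟩

end HopDomination

lemma log_add_one_div_add_one_le {x : ℝ} (hx : 1 ≤ x) :
    (Real.log (x + 1) + 1) / (x + 1) ≤ (Real.log x + 1) / x := by
  have hx0 : 0 < x := by linarith
  have hstep : Real.log (x + 1) - Real.log x ≤ 1 / x := by
    rw [← Real.log_div (by linarith) hx0.ne']
    calc Real.log ((x + 1) / x) ≤ (x + 1) / x - 1 := Real.log_le_sub_one_of_pos (by positivity)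
      _ = 1 / x := by field_simp; ring
  have hlog : 0 ≤ Real.log x := Real.log_nonneg hx
  rw [div_le_div_iff₀ (by linarith) hx0]
  have := mul_le_mul_of_nonneg_left hstep hx0.le
  rw [mul_one_div_cancel hx0.ne'] at this
  nlinarith

theorem stmt18_general {n : ℕ} (G : SimpleGraph (Fin n))
    (hn : (n : ℝ) < (minHopDeg G) ^ 2 / (Real.log (minHopDeg G) + 1)) :
    (tsrDomNum G : ℝ) ≤
        (Real.log (minHopDeg G + 1) + 1) / (minHopDeg G + 1) * n ∧
      (ttsrDomNum G : ℝ) ≤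
        (Real.log (minHopDeg G) + 1) / (minHopDeg G) * n := by
  set δ := minHopDeg G
  have hδ : 0 < δ := by
    refine Nat.pos_of_ne_zero fun h0 => ?_
    rw [h0, Nat.cast_zero, zero_pow two_ne_zero, zero_div] at hn
    exact (Nat.cast_nonneg n).not_gt hn
  have hδ1 : (1 : ℝ) ≤ δ := by exact_mod_cast hδ
  have hlog : 0 < Real.log δ + 1 := by linarith [Real.log_nonneg hδ1]
  have hsmall : (Real.log δ + 1) / δ * n < δ := by
    calc (Real.log δ + 1) / δ * n < (Real.log δ + 1) / δ * (δ ^ 2 / (Real.log δ + 1)) :=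
          mul_lt_mul_of_pos_left hn (by positivity)
      _ = δ := by field_simp
  have hsmall' : (Real.log (δ + 1) + 1) / (δ + 1) * n < δ :=
    (mul_le_mul_of_nonneg_right (log_add_one_div_add_one_le hδ1) n.cast_nonneg).trans_lt hsmall
  obtain ⟨S, hS, hSc⟩ := exists_isHopDomSet_card_le G
  obtain ⟨T, hT, hTc⟩ := exists_isTwoStepDomSet_card_le G hδ
  have hSδ : #S < δ := by exact_mod_cast hSc.trans_lt hsmall'
  have hTδ : #T < δ := by exact_mod_cast hTc.trans_lt hsmall
  exact ⟨(Nat.cast_le.mpr (tsrDomNum_le_card G hS hSδ)).trans hSc,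
    (Nat.cast_le.mpr (ttsrDomNum_le_card G hT hTδ)).trans hTc⟩

theorem stmt18 {n : ℕ} (G : SimpleGraph (Fin n)) (hδh : 1 ≤ minHopDeg G)
    (hn : (n : ℝ) < (minHopDeg G) ^ 2 / (Real.log (minHopDeg G) + 1)) :
    (tsrDomNum G : ℝ) ≤
        (Real.log (minHopDeg G + 1) + 1) / (minHopDeg G + 1) * n ∧
      (ttsrDomNum G : ℝ) ≤
        (Real.log (minHopDeg G) + 1) / (minHopDeg G) * n :=
  stmt18_general G hn
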